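/- arXiv:1805.01136 — 3 statements merged into one kernel-verified Lean document; each statement's English description precedes it below -/
import Mathlib

section
/- Let f : ℝ → ℝ be continuous on [0,1] and let p* ∈ [0,1] be its unique global maximizer over [0,1], i.e. f(p) < f(p*) for every p ∈ [0,1] with p ≠ p*. Assume f is differentiable on an open interval containing p*, that f'(p*) = 0, and that f' is differentiable at p* with second derivative f''(p*) < 0. Then there exist constants M2 > 0 and M3 > 0 such that for all p ∈ [0,1], M2·(p* − p)² ≤ f(p*) − f(p) ≤ M3·(p* − p)². -/
/-!
Second-order Taylor expansion with Peano remainder gives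
`f p* - f p = -f''(p*)/2 · (p* - p)² + o((p* - p)²)`, so near `p*` the gap `f p* - f p` is squeezed
between two positive multiples of `(p* - p)²`. Away from `p*` the ratio
`(f p* - f p) / (p* - p)²` is continuous and positive on a compact set, so it is bounded above and
bounded below by a positive constant.
-/

open Filter Topology Asymptotics Metric Set

theorem isLittleO_taylor_two_of_hasDerivAt_deriv {f : ℝ → ℝ} {x₀ f₂ : ℝ}
    (hf : ∀ᶠ x in 𝓝 x₀, DifferentiableAt ℝ f x) (hf₂ : HasDerivAt (deriv f) f₂ x₀) :
    (fun x => f x - f x₀ - deriv f x₀ * (x - x₀) - f₂ / 2 * (x - x₀) ^ 2)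
      =o[𝓝 x₀] fun x => (x - x₀) ^ 2 := by
  obtain ⟨ε, hε, hball⟩ := eventually_nhds_iff_ball.1 hf
  have hs : 𝓝[ball x₀ ε] x₀ = 𝓝 x₀ := isOpen_ball.nhdsWithin_eq (mem_ball_self hε)
  have hderiv : ∀ x ∈ ball x₀ ε, HasDerivWithinAt
      (fun y => f y - deriv f x₀ * (y - x₀) - f₂ / 2 * (y - x₀) ^ 2)
      (deriv f x - deriv f x₀ - (x - x₀) • f₂) (ball x₀ ε) x := by
    intro x hx
    have hlin := (hasDerivAt_id' x).sub_const x₀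
    have h := ((hball x hx).hasDerivAt.fun_sub (hlin.const_mul (deriv f x₀))).fun_sub
      ((hlin.fun_pow 2).const_mul (f₂ / 2))
    refine (h.congr_deriv ?_).hasDerivWithinAt
    simp only [smul_eq_mul]
    ring
  have hremainder := hasDerivAt_iff_isLittleO.1 hf₂
  rw [← hs, ← pow_one (fun x : ℝ => x - x₀)] at hremainder
  have hlittle := (convex_ball x₀ ε).isLittleO_pow_succ_real (mem_ball_self hε) hderiv hremainder
  rw [hs] at hlittle
  exact hlittle.congr_left fun x => by ring

theorem eventually_quadratic_envelope_of_deriv_eq_zero {f : ℝ → ℝ} {x₀ f₂ : ℝ}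
    (hf : ∀ᶠ x in 𝓝 x₀, DifferentiableAt ℝ f x) (hf₁ : deriv f x₀ = 0)
    (hf₂ : HasDerivAt (deriv f) f₂ x₀) (hneg : f₂ < 0) :
    ∀ᶠ x in 𝓝 x₀,
      -f₂ / 4 * (x₀ - x) ^ 2 ≤ f x₀ - f x ∧ f x₀ - f x ≤ -3 * f₂ / 4 * (x₀ - x) ^ 2 := by
  have hmargin : 0 < -f₂ / 4 := by linarith
  filter_upwards [(isLittleO_taylor_two_of_hasDerivAt_deriv hf hf₂).bound hmargin] with x hx
  rw [hf₁, Real.norm_eq_abs, Real.norm_eq_abs, abs_sq, sub_sq_comm x x₀, abs_le] at hx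
  constructor <;> linarith [hx.1, hx.2]

theorem exists_pos_mul_sq_le_of_isCompact {K : Set ℝ} (hK : IsCompact K) {g : ℝ → ℝ}
    (hg : ContinuousOn g K) {x₀ m : ℝ} (hm : 0 < m) (hpos : ∀ x ∈ K, x ≠ x₀ → 0 < g x)
    (hnear : ∀ᶠ x in 𝓝 x₀, m * (x₀ - x) ^ 2 ≤ g x) :
    ∃ M > 0, ∀ x ∈ K, M * (x₀ - x) ^ 2 ≤ g x := by
  obtain ⟨δ, hδ, hball⟩ := eventually_nhds_iff_ball.1 hnear
  have hne : ∀ x ∈ K \ ball x₀ δ, x ≠ x₀ := fun x hx h => hx.2 (h ▸ mem_ball_self hδ)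
  have hsq : ∀ x ∈ K \ ball x₀ δ, 0 < (x₀ - x) ^ 2 :=
    fun x hx => sq_pos_of_ne_zero (sub_ne_zero.2 (hne x hx).symm)
  obtain ⟨m', hm', hfar⟩ := (hK.diff isOpen_ball).exists_forall_le'
    ((hg.mono sdiff_subset).div (by fun_prop) fun x hx => (hsq x hx).ne')
    fun x hx => div_pos (hpos x hx.1 (hne x hx)) (hsq x hx)
  refine ⟨min m m', lt_min hm hm', fun x hx => ?_⟩
  by_cases hxδ : x ∈ ball x₀ δ
  · exact (mul_le_mul_of_nonneg_right (min_le_left _ _) (sq_nonneg _)).trans (hball x hxδ)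
  · have hx' : x ∈ K \ ball x₀ δ := ⟨hx, hxδ⟩
    have := (le_div_iff₀ (hsq x hx')).1 (hfar x hx')
    exact (mul_le_mul_of_nonneg_right (min_le_right _ _) (sq_nonneg _)).trans this

theorem exists_le_pos_mul_sq_of_isCompact {K : Set ℝ} (hK : IsCompact K) {g : ℝ → ℝ}
    (hg : ContinuousOn g K) {x₀ m : ℝ} (hm : 0 < m)
    (hnear : ∀ᶠ x in 𝓝 x₀, g x ≤ m * (x₀ - x) ^ 2) :
    ∃ M > 0, ∀ x ∈ K, g x ≤ M * (x₀ - x) ^ 2 := by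
  obtain ⟨δ, hδ, hball⟩ := eventually_nhds_iff_ball.1 hnear
  have hsq : ∀ x ∈ K \ ball x₀ δ, 0 < (x₀ - x) ^ 2 :=
    fun x hx => sq_pos_of_ne_zero (sub_ne_zero.2 fun h => hx.2 (h ▸ mem_ball_self hδ))
  obtain ⟨M', hfar⟩ := (hK.diff isOpen_ball).bddAbove_image
    ((hg.mono sdiff_subset).div (by fun_prop) fun x hx => (hsq x hx).ne')
  refine ⟨max m M', lt_max_of_lt_left hm, fun x hx => ?_⟩
  by_cases hxδ : x ∈ ball x₀ δ
  · exact (hball x hxδ).trans (mul_le_mul_of_nonneg_right (le_max_left _ _) (sq_nonneg _))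
  · have hx' : x ∈ K \ ball x₀ δ := ⟨hx, hxδ⟩
    have := (div_le_iff₀ (hsq x hx')).1 (hfar (mem_image_of_mem _ hx'))
    exact this.trans (mul_le_mul_of_nonneg_right (le_max_right _ _) (sq_nonneg _))

theorem quadratic_envelope_at_unique_max_general
    (f : ℝ → ℝ) (pstar : ℝ) (f2 : ℝ)
    (hcont : ContinuousOn f (Set.Icc 0 1))
    (hmax : ∀ p ∈ Set.Icc (0:ℝ) 1, p ≠ pstar → f p < f pstar)
    (hdiff : ∃ a b : ℝ, pstar ∈ Set.Ioo a b ∧ ∀ x ∈ Set.Ioo a b, DifferentiableAt ℝ f x)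
    (hderiv0 : deriv f pstar = 0)
    (hderiv2 : HasDerivAt (deriv f) f2 pstar)
    (hneg : f2 < 0) :
    ∃ M2 M3 : ℝ, 0 < M2 ∧ 0 < M3 ∧ ∀ p ∈ Set.Icc (0:ℝ) 1,
      M2 * (pstar - p)^2 ≤ f pstar - f p ∧ f pstar - f p ≤ M3 * (pstar - p)^2 := by
  obtain ⟨a, b, hab, hfd⟩ := hdiff
  have hnear := eventually_quadratic_envelope_of_deriv_eq_zero
    (eventually_of_mem (Ioo_mem_nhds hab.1 hab.2) hfd) hderiv0 hderiv2 hneg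
  have hgap : ContinuousOn (fun p => f pstar - f p) (Icc 0 1) := continuousOn_const.sub hcont
  obtain ⟨M2, hM2, hlower⟩ := exists_pos_mul_sq_le_of_isCompact isCompact_Icc hgap
    (by linarith : 0 < -f2 / 4) (fun p hp hne => sub_pos.2 (hmax p hp hne))
    (hnear.mono fun _ h => h.1)
  obtain ⟨M3, hM3, hupper⟩ := exists_le_pos_mul_sq_of_isCompact isCompact_Icc hgap
    (by linarith : 0 < -3 * f2 / 4) (hnear.mono fun _ h => h.2)
  exact ⟨M2, M3, hM2, hM3, fun p hp => ⟨hlower p hp, hupper p hp⟩⟩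

/-- Proposition 1: quadratic growth envelope at a smooth, locally concave
global maximizer. -/
theorem quadratic_envelope_at_unique_max
    (f : ℝ → ℝ) (pstar : ℝ) (f2 : ℝ)
    (hcont : ContinuousOn f (Set.Icc 0 1))
    (hpstar : pstar ∈ Set.Icc (0:ℝ) 1)
    (hmax : ∀ p ∈ Set.Icc (0:ℝ) 1, p ≠ pstar → f p < f pstar)
    (hdiff : ∃ a b : ℝ, pstar ∈ Set.Ioo a b ∧ ∀ x ∈ Set.Ioo a b, DifferentiableAt ℝ f x)
    (hderiv0 : deriv f pstar = 0)
    (hderiv2 : HasDerivAt (deriv f) f2 pstar)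
    (hneg : f2 < 0) :
    ∃ M2 M3 : ℝ, 0 < M2 ∧ 0 < M3 ∧ ∀ p ∈ Set.Icc (0:ℝ) 1,
      M2 * (pstar - p)^2 ≤ f pstar - f p ∧ f pstar - f p ≤ M3 * (pstar - p)^2 :=
  quadratic_envelope_at_unique_max_general f pstar f2 hcont hmax hdiff hderiv0 hderiv2 hneg
end

section
/- Work in the Euclidean space E = EuclideanSpace ℝ (Fin d). Let J be a finite index set, let (B_j)_{j ∈ J} be pairwise disjoint subsets of E, and let w : J → {0,1}. Define h : E → ℝ by h(x) = Σ_{j ∈ J} w_j · (indicator of B_j at x) · infDist x (frontier B_j). Then h is Lipschitz with constant 1: for all x1, x2 ∈ E, |h(x1) − h(x2)| ≤ dist x1 x2. -/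
open Metric

/-- If `x ∈ B` and `y ∉ B`, the segment from `x` to `y` meets `frontier B`,
so the distance from `x` to the frontier is at most `dist x y`. -/
lemma infDist_frontier_le_dist_of_mem_of_notMem
    {E : Type*} [NormedAddCommGroup E] [NormedSpace ℝ E]
    {B : Set E} {x y : E} (hx : x ∈ B) (hy : y ∉ B) :
    infDist x (frontier B) ≤ dist x y := by
  have hseg : ∃ z ∈ segment ℝ x y, z ∈ frontier B := by
    by_cases hxf : x ∈ frontier B
    · exact ⟨x, left_mem_segment ℝ x y, hxf⟩
    by_cases hyf : y ∈ frontier B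
    · exact ⟨y, right_mem_segment ℝ x y, hyf⟩
    by_contra hcon
    push_neg at hcon
    have hxu : x ∈ interior B := by
      by_contra hxi
      exact hxf ⟨subset_closure hx, hxi⟩
    have hyv : y ∈ (closure B)ᶜ := by
      intro hyc
      exact hyf ⟨hyc, fun hyi => hy (interior_subset hyi)⟩
    have hsub : segment ℝ x y ⊆ interior B ∪ (closure B)ᶜ := by
      intro z hz
      have hzf := hcon z hz
      by_cases hzc : z ∈ closure B
      · left
        by_contra hzi
        exact hzf ⟨hzc, hzi⟩
      · right; exact hzc
    obtain ⟨z, hzs, hzu, hzv⟩ :=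
      (convex_segment x y).isPreconnected (interior B) (closure B)ᶜ
        isOpen_interior isClosed_closure.isOpen_compl hsub
        ⟨x, left_mem_segment ℝ x y, hxu⟩ ⟨y, right_mem_segment ℝ x y, hyv⟩
    exact hzv (subset_closure (interior_subset hzu))
  obtain ⟨z, hzs, hzf⟩ := hseg
  have hzb : z ∈ closedBall x (dist x y) :=
    (convex_closedBall x (dist x y)).segment_subset
      (mem_closedBall_self dist_nonneg) (by simpa [mem_closedBall, dist_comm]) hzs
  calc infDist x (frontier B) ≤ dist x z := infDist_le_dist_of_mem hzf
    _ ≤ dist x y := by simpa [mem_closedBall, dist_comm x z] using hzb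

/-- The optimal-decision map of the lower-bound construction,
`h x = ∑ j, w j · 1_{B j}(x) · infDist x (frontier (B j))`, is 1-Lipschitz
when the bins `B j` are pairwise disjoint and `w j ∈ {0, 1}`. -/
theorem optimal_decision_map_lipschitz
    (d : ℕ) (J : Type*) [Fintype J]
    (B : J → Set (EuclideanSpace ℝ (Fin d)))
    (hdisj : Pairwise (Function.onFun Disjoint B))
    (w : J → ℝ) (hw : ∀ j, w j = 0 ∨ w j = 1)
    (h : EuclideanSpace ℝ (Fin d) → ℝ)
    (hh : ∀ x, h x = ∑ j, w j *
      (B j).indicator (fun y => infDist y (frontier (B j))) x) :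
    ∀ x1 x2 : EuclideanSpace ℝ (Fin d), |h x1 - h x2| ≤ dist x1 x2 := by
  classical
  -- value of h at a point in B i
  have hval : ∀ (x : EuclideanSpace ℝ (Fin d)) (i : J), x ∈ B i →
      h x = w i * infDist x (frontier (B i)) := by
    intro x i hxi
    rw [hh x]
    rw [Finset.sum_eq_single i]
    · simp [Set.indicator_of_mem hxi]
    · intro j _ hji
      have hxj : x ∉ B j := fun hxj =>
        Set.disjoint_left.mp (hdisj hji) hxj hxi
      simp [Set.indicator_of_notMem hxj]
    · intro hi; exact absurd (Finset.mem_univ i) hi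
  have hval0 : ∀ (x : EuclideanSpace ℝ (Fin d)), (∀ j, x ∉ B j) → h x = 0 := by
    intro x hx
    rw [hh x]
    apply Finset.sum_eq_zero
    intro j _
    simp [Set.indicator_of_notMem (hx j)]
  -- bounds on h
  have hbound : ∀ (x y : EuclideanSpace ℝ (Fin d)) (i : J), x ∈ B i → y ∉ B i →
      0 ≤ h x ∧ h x ≤ dist x y := by
    intro x y i hxi hyi
    rw [hval x i hxi]
    have h1 : infDist x (frontier (B i)) ≤ dist x y :=
      infDist_frontier_le_dist_of_mem_of_notMem hxi hyi
    have h2 : (0:ℝ) ≤ infDist x (frontier (B i)) := infDist_nonneg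
    rcases hw i with h0 | h0 <;> rw [h0] <;> constructor <;> nlinarith
  intro x1 x2
  by_cases h1 : ∃ i, x1 ∈ B i
  · obtain ⟨i, hi⟩ := h1
    by_cases h2 : ∃ k, x2 ∈ B k
    · obtain ⟨k, hk⟩ := h2
      by_cases hik : i = k
      · subst hik
        rw [hval x1 i hi, hval x2 i hk, ← mul_sub, abs_mul]
        have hd : |infDist x1 (frontier (B i)) - infDist x2 (frontier (B i))|
            ≤ dist x1 x2 := by
          rw [abs_sub_le_iff]
          constructor
          · have := infDist_le_infDist_add_dist (x := x1) (y := x2)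
              (s := frontier (B i)); linarith
          · have := infDist_le_infDist_add_dist (x := x2) (y := x1)
              (s := frontier (B i)); rw [dist_comm]; linarith
        rcases hw i with h0 | h0 <;> rw [h0]
        · simpa using dist_nonneg (x := x1) (y := x2)
        · simpa using hd
      · have hx2i : x2 ∉ B i := fun hc => Set.disjoint_left.mp (hdisj hik) hc hk
        have hx1k : x1 ∉ B k := fun hc =>
          Set.disjoint_left.mp (hdisj hik) hi hc
        obtain ⟨ha, hb⟩ := hbound x1 x2 i hi hx2i
        obtain ⟨hc, hd⟩ := hbound x2 x1 k hk hx1k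
        rw [dist_comm x2 x1] at hd
        rw [abs_sub_le_iff]; constructor <;> linarith
    · push_neg at h2
      rw [hval0 x2 h2]
      obtain ⟨ha, hb⟩ := hbound x1 x2 i hi (h2 i)
      rw [sub_zero, abs_of_nonneg ha]; exact hb
  · push_neg at h1
    rw [hval0 x1 h1]
    by_cases h2 : ∃ k, x2 ∈ B k
    · obtain ⟨k, hk⟩ := h2
      obtain ⟨ha, hb⟩ := hbound x2 x1 k hk (h1 k)
      rw [zero_sub, abs_neg, abs_of_nonneg ha, dist_comm]; exact hb
    · push_neg at h2
      rw [hval0 x2 h2]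
      simpa using dist_nonneg
end

section
/- Work in the Euclidean space E = EuclideanSpace ℝ (Fin d). Let J be a finite index set, let (B_j)_{j ∈ J} be pairwise disjoint subsets of E, and let w : J → {0,1}. Define h : E → ℝ by h(x) = Σ_{j ∈ J} w_j · (indicator of B_j at x) · infDist x (frontier B_j), and define f : E × ℝ → ℝ by f(x,p) = −p² + 2p·h(x). Assume that infDist x (frontier B_j) ≤ 1/2 whenever x ∈ B_j and w_j = 1. Then for all x1, x2 ∈ E and all p1, p2 ∈ [0,1], |f(x1,p1) − f(x2,p2)| ≤ 4·|p1 − p2| + 4·dist x1 x2. -/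
open Metric

lemma infDist_frontier_le_dist' {E : Type*} [NormedAddCommGroup E] [NormedSpace ℝ E]
    {S : Set E} {x y : E} (hx : x ∈ S) (hy : y ∉ S) :
    infDist x (frontier S) ≤ dist x y := by
  by_contra hc
  push_neg at hc
  set r := infDist x (frontier S) with hr
  have hr0 : 0 < r := lt_of_le_of_lt dist_nonneg hc
  have hball : ball x r ∩ frontier S = ∅ := by
    ext z
    simp only [Set.mem_inter_iff, Set.mem_empty_iff_false, iff_false, not_and, mem_ball]
    intro hz hzf
    exact absurd (infDist_le_dist_of_mem hzf) (by rw [dist_comm] at hz; linarith)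
  have hxi : x ∈ interior S := by
    rw [← self_diff_frontier]
    refine ⟨hx, fun hxf => ?_⟩
    have := infDist_le_dist_of_mem hxf (x := x)
    simp at this
    linarith
  have hsub : ball x r ⊆ interior S ∪ (closure S)ᶜ := by
    intro z hz
    by_cases hzc : z ∈ closure S
    · left
      have : z ∉ frontier S := fun hf => by
        have : z ∈ ball x r ∩ frontier S := ⟨hz, hf⟩
        rw [hball] at this; exact this
      rw [frontier, Set.mem_diff] at this
      push_neg at this
      exact this hzc
    · right; exact hzc
  have hconn : IsPreconnected (ball x r) := (convex_ball x r).isPreconnected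
  have hdisj2 : Disjoint (interior S) (closure S)ᶜ :=
    Set.disjoint_compl_right_iff_subset.mpr (interior_subset.trans subset_closure)
  rcases hconn.subset_or_subset isOpen_interior (isOpen_compl_iff.mpr isClosed_closure)
    (by exact hdisj2) hsub with hs | hs
  · have : y ∈ interior S := hs (mem_ball.mpr (by rw [dist_comm]; exact hc))
    exact hy (interior_subset this)
  · have : x ∈ (closure S)ᶜ := hs (mem_ball_self hr0)
    exact this (subset_closure hx)

/-- The reward function `f_w(x, p) = -p² + 2 p h(x)` of the lower-bound class
is Lipschitz with constant `M1 = 4` on `[0,1]` in `p` and globally in `x`. -/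
theorem reward_function_lipschitz
    (d : ℕ) (J : Type*) [Fintype J]
    (B : J → Set (EuclideanSpace ℝ (Fin d)))
    (hdisj : Pairwise (Function.onFun Disjoint B))
    (w : J → ℝ) (hw : ∀ j, w j = 0 ∨ w j = 1)
    (h : EuclideanSpace ℝ (Fin d) → ℝ)
    (hh : ∀ x, h x = ∑ j, w j *
      (B j).indicator (fun y => infDist y (frontier (B j))) x)
    (f : EuclideanSpace ℝ (Fin d) → ℝ → ℝ)
    (hf : ∀ x p, f x p = -p^2 + 2 * p * h x)
    (hbound : ∀ j, ∀ x ∈ B j, w j = 1 → infDist x (frontier (B j)) ≤ 1/2) :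
    ∀ x1 x2 : EuclideanSpace ℝ (Fin d), ∀ p1 ∈ Set.Icc (0:ℝ) 1, ∀ p2 ∈ Set.Icc (0:ℝ) 1,
      |f x1 p1 - f x2 p2| ≤ 4 * |p1 - p2| + 4 * dist x1 x2 := by
  -- characterization of h
  have hmem : ∀ x : EuclideanSpace ℝ (Fin d), ∀ j, x ∈ B j →
      h x = w j * infDist x (frontier (B j)) := by
    intro x j hx
    rw [hh]
    rw [Finset.sum_eq_single_of_mem j (Finset.mem_univ j)]
    · rw [Set.indicator_of_mem hx]
    · intro k _ hk
      have : x ∉ B k := fun hxk =>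
        Set.disjoint_left.mp (hdisj hk) hxk hx
      rw [Set.indicator_of_notMem this, mul_zero]
  have hnot : ∀ x : EuclideanSpace ℝ (Fin d), (∀ j, x ∉ B j) → h x = 0 := by
    intro x hx
    rw [hh]
    apply Finset.sum_eq_zero
    intro j _
    rw [Set.indicator_of_notMem (hx j), mul_zero]
  have h0 : ∀ x, 0 ≤ h x := by
    intro x
    by_cases hx : ∃ j, x ∈ B j
    · obtain ⟨j, hj⟩ := hx
      rw [hmem x j hj]
      rcases hw j with h1 | h1 <;> rw [h1]
      · simp
      · simpa using infDist_nonneg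
    · push_neg at hx
      rw [hnot x hx]
  have hhalf : ∀ x, h x ≤ 1/2 := by
    intro x
    by_cases hx : ∃ j, x ∈ B j
    · obtain ⟨j, hj⟩ := hx
      rw [hmem x j hj]
      rcases hw j with h1 | h1 <;> rw [h1]
      · norm_num
      · simpa using hbound j x hj h1
    · push_neg at hx
      rw [hnot x hx]; norm_num
  have hlip1 : ∀ x y : EuclideanSpace ℝ (Fin d), h x ≤ h y + dist x y := by
    intro x y
    by_cases hx : ∃ j, x ∈ B j
    · obtain ⟨j, hj⟩ := hx
      rw [hmem x j hj]
      rcases hw j with h1 | h1 <;> rw [h1]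
      · have := h0 y
        have := dist_nonneg (x := x) (y := y)
        linarith
      · rw [one_mul]
        by_cases hy : y ∈ B j
        · rw [hmem y j hy, h1, one_mul]
          exact infDist_le_infDist_add_dist
        · have := infDist_frontier_le_dist' hj hy
          have := h0 y
          linarith
    · push_neg at hx
      rw [hnot x hx]
      have := h0 y
      have := dist_nonneg (x := x) (y := y)
      linarith
  intro x1 x2 p1 hp1 p2 hp2
  obtain ⟨hp1a, hp1b⟩ := hp1
  obtain ⟨hp2a, hp2b⟩ := hp2
  rw [hf, hf]
  have ha0 := h0 x1; have ha1 := hhalf x1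
  have hb0 := h0 x2; have hb1 := hhalf x2
  have hab : h x1 - h x2 ≤ dist x1 x2 := by
    have := hlip1 x1 x2; linarith
  have hba : h x2 - h x1 ≤ dist x1 x2 := by
    have := hlip1 x2 x1; rw [dist_comm] at this; linarith
  have hq1 : p1 - p2 ≤ |p1 - p2| := le_abs_self _
  have hq2 : p2 - p1 ≤ |p1 - p2| := by rw [abs_sub_comm]; exact le_abs_self _
  have hq0 : 0 ≤ |p1 - p2| := abs_nonneg _
  have hD : 0 ≤ dist x1 x2 := dist_nonneg
  rw [abs_le]
  constructor <;>
    nlinarith [mul_nonneg (add_nonneg hp1a hp2a) (by linarith : (0:ℝ) ≤ |p1 - p2| - (p2 - p1)),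
      mul_nonneg (add_nonneg hp1a hp2a) (by linarith : (0:ℝ) ≤ |p1 - p2| - (p1 - p2)),
      mul_nonneg hp1a (by linarith : (0:ℝ) ≤ dist x1 x2 - (h x1 - h x2)),
      mul_nonneg hp1a (by linarith : (0:ℝ) ≤ dist x1 x2 - (h x2 - h x1)),
      mul_nonneg hp2a (by linarith : (0:ℝ) ≤ dist x1 x2 - (h x2 - h x1)),
      mul_nonneg hp2a (by linarith : (0:ℝ) ≤ dist x1 x2 - (h x1 - h x2)),
      mul_nonneg hb0 (by linarith : (0:ℝ) ≤ |p1 - p2| - (p1 - p2)),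
      mul_nonneg hb0 (by linarith : (0:ℝ) ≤ |p1 - p2| - (p2 - p1)),
      mul_nonneg ha0 (by linarith : (0:ℝ) ≤ |p1 - p2| - (p1 - p2)),
      mul_nonneg ha0 (by linarith : (0:ℝ) ≤ |p1 - p2| - (p2 - p1)),
      mul_nonneg hq0 hD]
end
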